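/- If A is a quasi-ideal automaton with congruences π (s π t iff sx = tx for all [x]_A ∈ I(A)) and ρ (s ρ t iff s,t ∈ Im_A(e) for some idempotent [e]_A ∈ E(A)), then π ∩ ρ = 1_S and π ∘ ρ = S × S. -/

import Mathlib

/-- Extended transition function of an automaton: the action of a word on a state. -/
def run {S Alph : Type*} (δ : S → Alph → S) (s : S) (x : List Alph) : S :=
  x.foldl δ s

/-- Single-letter transition of the direct product automaton. -/
def prodStep {S T Alph : Type*} (δ : S → Alph → S) (γ : T → Alph → T) :
    S × T → Alph → S × T :=
  fun p a => (δ p.1 a, γ p.2 a)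

/-- An automaton is strongly connected if every state reaches every state. -/
def StronglyConnected {S Alph : Type*} (δ : S → Alph → S) : Prop :=
  ∀ s t : S, ∃ x : List Alph, run δ s x = t

/-- A word is a reset input function if it sends every state to one fixed state. -/
def IsReset {S Alph : Type*} (δ : S → Alph → S) (x : List Alph) : Prop :=
  ∃ t : S, ∀ s : S, run δ s x = t

/-- A synchronizing automaton has at least one reset input function. -/
def Synchronizing {S Alph : Type*} (δ : S → Alph → S) : Prop :=
  ∃ x : List Alph, IsReset δ x

/-- A permutation automaton: every input word acts bijectively on the states. -/
def PermutationAut {S Alph : Type*} (δ : S → Alph → S) : Prop :=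
  ∀ x : List Alph, Function.Bijective (fun s : S => run δ s x)

/-- The range `Im_A(x)` of the input function given by the word `x`. -/
def Im {S Alph : Type*} (δ : S → Alph → S) (x : List Alph) : Set S :=
  Set.range fun s : S => run δ s x

/-- The rank of a word: cardinality of its range. -/
noncomputable def wordRank {S Alph : Type*} (δ : S → Alph → S) (x : List Alph) : ℕ :=
  (Im δ x).ncard

/-- `[x]_A` lies in the minimal ideal `I(A)` of the transition semigroup:
`x` is a nonempty word of minimal rank among nonempty words. -/
def InMinIdeal {S Alph : Type*} (δ : S → Alph → S) (x : List Alph) : Prop :=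
  x ≠ [] ∧ ∀ y : List Alph, y ≠ [] → wordRank δ x ≤ wordRank δ y

/-- `x ≡_A y` : the words `x` and `y` act equally on every state. -/
def ActEq {S Alph : Type*} (δ : S → Alph → S) (x y : List Alph) : Prop :=
  ∀ s : S, run δ s x = run δ s y

/-- `[e]_A` is an idempotent element of the minimal ideal `I(A)`. -/
def IdemMin {S Alph : Type*} (δ : S → Alph → S) (e : List Alph) : Prop :=
  InMinIdeal δ e ∧ ActEq δ (e ++ e) e

/-- The minimal ideal `I(A)` is right simple: for all `a, b ∈ I(A)` there is
`c ∈ I(A)` with `ac = b`. -/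
def RightSimpleMin {S Alph : Type*} (δ : S → Alph → S) : Prop :=
  ∀ a b : List Alph, InMinIdeal δ a → InMinIdeal δ b →
    ∃ c : List Alph, InMinIdeal δ c ∧ ActEq δ (a ++ c) b

/-- The minimal ideal `I(A)` is a right group: right simple with an idempotent. -/
def RightGroupMin {S Alph : Type*} (δ : S → Alph → S) : Prop :=
  RightSimpleMin δ ∧ ∃ e : List Alph, IdemMin δ e

/-- The ranges of the idempotents of `I(A)` form a partition of the state set. -/
def IdemPartition {S Alph : Type*} (δ : S → Alph → S) : Prop :=
  (∀ s : S, ∃ e : List Alph, IdemMin δ e ∧ s ∈ Im δ e) ∧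
  ∀ e f : List Alph, IdemMin δ e → IdemMin δ f →
    Im δ e ∩ Im δ f = ∅ ∨ Im δ e = Im δ f

/-- A quasi-ideal automaton. -/
def QuasiIdeal {S Alph : Type*} (δ : S → Alph → S) : Prop :=
  StronglyConnected δ ∧ RightGroupMin δ ∧ IdemPartition δ

/-- An automaton congruence: an equivalence relation on states compatible with
the action of every word. -/
def AutCongruence {S Alph : Type*} (δ : S → Alph → S) (r : S → S → Prop) : Prop :=
  Equivalence r ∧ ∀ s t : S, r s t → ∀ z : List Alph, r (run δ s z) (run δ t z)

/-- The congruence `π` : `s π t` iff `sx = tx` for every `[x]_A ∈ I(A)`. -/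
def piRel {S Alph : Type*} (δ : S → Alph → S) (s t : S) : Prop :=
  ∀ x : List Alph, InMinIdeal δ x → run δ s x = run δ t x

/-- The congruence `ρ` : `s ρ t` iff `s, t ∈ Im_A(e)` for some `[e]_A ∈ E(A)`. -/
def rhoRel {S Alph : Type*} (δ : S → Alph → S) (s t : S) : Prop :=
  ∃ e : List Alph, IdemMin δ e ∧ s ∈ Im δ e ∧ t ∈ Im δ e

/-!
An idempotent word `e` fixes every state of its range. Hence two states that lie in a common
range `Im(e)` with `e ∈ E(A)` and agree under every word of `I(A)`, in particular under `e`,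
coincide. Conversely, for an idempotent `f ∈ I(A)` every `x ∈ I(A)` factors as `x = f c`
by right simplicity, so `s x = s f f c = (s f) x`: the state `s f` is `π`-related to `s` and
lies in `Im(f)`, which covers any prescribed `t` once `f` is chosen by the partition property.
-/

lemma run_append {S Alph : Type*} (δ : S → Alph → S) (s : S) (x y : List Alph) :
    run δ s (x ++ y) = run δ (run δ s x) y := by
  simp [run, List.foldl_append]

lemma run_eq_self_of_mem_Im {S Alph : Type*} {δ : S → Alph → S} {e : List Alph}
    (he : ActEq δ (e ++ e) e) {s : S} (hs : s ∈ Im δ e) : run δ s e = s := by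
  obtain ⟨s', rfl⟩ := hs
  rw [← run_append, he s']

lemma eq_of_piRel_of_rhoRel {S Alph : Type*} {δ : S → Alph → S} {s t : S}
    (hπ : piRel δ s t) (hρ : rhoRel δ s t) : s = t := by
  obtain ⟨e, he, hs, ht⟩ := hρ
  rw [← run_eq_self_of_mem_Im he.2 hs, ← run_eq_self_of_mem_Im he.2 ht, hπ e he.1]

lemma piRel_run_of_idemMin {S Alph : Type*} {δ : S → Alph → S} (hrs : RightSimpleMin δ)
    {f : List Alph} (hf : IdemMin δ f) (s : S) : piRel δ s (run δ s f) := by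
  intro x hx
  obtain ⟨c, -, hfc⟩ := hrs f x hf.1 hx
  rw [← hfc s, ← hfc (run δ s f), run_append, run_append, ← run_append δ s f f, hf.2]

theorem stmt13_general {S Alph : Type*} (δ : S → Alph → S) (hq : QuasiIdeal δ) :
    (∀ s t : S, piRel δ s t → rhoRel δ s t → s = t) ∧
    (∀ s t : S, ∃ u : S, piRel δ s u ∧ rhoRel δ u t) := by
  obtain ⟨-, ⟨hrs, -⟩, hcover, -⟩ := hq
  refine ⟨fun s t => eq_of_piRel_of_rhoRel, fun s t => ?_⟩
  obtain ⟨f, hf, htf⟩ := hcover t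
  exact ⟨run δ s f, piRel_run_of_idemMin hrs hf s, f, hf, ⟨s, rfl⟩, htf⟩

/-- For a quasi-ideal automaton, `π ∩ ρ = 1_S` and `π ∘ ρ = S × S`. -/
theorem stmt13 {S Alph : Type*} [Finite S] (δ : S → Alph → S) (hq : QuasiIdeal δ) :
    (∀ s t : S, piRel δ s t → rhoRel δ s t → s = t) ∧
    (∀ s t : S, ∃ u : S, piRel δ s u ∧ rhoRel δ u t) :=
  stmt13_general δ hq
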